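/- Define Φ : [0,∞) × ℝ → ℝ by Φ(t,ρ) = −t/2 + log(1 + e^{ρ+t}) if ρ ≤ −t; Φ(t,ρ) = ρ/2 + log 2 if −t ≤ ρ ≤ t; and Φ(t,ρ) = t/2 + log(1 + e^{ρ−t}) if ρ ≥ t. Then Φ is convex on [0,∞) × ℝ; moreover, at every point (t,ρ) with t > 0 and ρ ∉ {−t, t}, Φ is twice differentiable and the determinant of its 2×2 Hessian vanishes: ∂²Φ/∂t² · ∂²Φ/∂ρ² − (∂²Φ/∂t∂ρ)² = 0. -/

import Mathlib

/-!
For `t ≥ 0` one has `Φ(t,ρ) = ρ/2 + g(max(|ρ| - t, 0))` with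
`g(x) = log(1 + eˣ) - x/2 = log(2 cosh(x/2))`, which is convex, and nondecreasing on `[0,∞)`;
composed with the convex function `max(|ρ| - t, 0)` it gives the convexity of `Φ`.
Off the corners `ρ = ±t`, `Φ` is locally an affine function plus `L(αt + βρ)` with
`L(x) = log(1 + eˣ)`, and the Hessian `L'' · (α, β)ᵀ(α, β)` of such a ridge function has rank
at most one.
-/

/-- The explicit toric geodesic ray on `ℂP¹`: `Φ(t,ρ) = −t/2 + log(1+e^{ρ+t})` for
`ρ ≤ −t`, `Φ(t,ρ) = ρ/2 + log 2` for `−t ≤ ρ ≤ t`, and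
`Φ(t,ρ) = t/2 + log(1+e^{ρ−t})` for `ρ ≥ t`. -/
noncomputable def PhiRay (p : ℝ × ℝ) : ℝ :=
  if p.2 ≤ -p.1 then -p.1 / 2 + Real.log (1 + Real.exp (p.2 + p.1))
  else if p.2 ≤ p.1 then p.2 / 2 + Real.log 2
  else p.1 / 2 + Real.log (1 + Real.exp (p.2 - p.1))

open Real Set Filter Topology

noncomputable def softplus (x : ℝ) : ℝ := log (1 + exp x)

lemma softplus_zero : softplus 0 = log 2 := by norm_num [softplus]

lemma softplus_neg (x : ℝ) : softplus (-x) = softplus x - x := by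
  have h : 1 + exp (-x) = (1 + exp x) * exp (-x) := by
    rw [add_mul, one_mul, ← exp_add, add_neg_cancel, exp_zero, add_comm]
  rw [softplus, softplus, h, log_mul (by positivity) (exp_pos _).ne', log_exp, sub_eq_add_neg]

lemma hasDerivAt_softplus (x : ℝ) : HasDerivAt softplus (sigmoid x) x := by
  convert ((hasDerivAt_exp x).const_add 1).log (by positivity) using 1
  · rfl
  rw [sigmoid_def, exp_neg]
  field_simp
  ring

lemma contDiff_softplus {n : WithTop ℕ∞} : ContDiff ℝ n softplus :=
  (contDiff_const.add contDiff_exp).log fun x => by positivity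

lemma hasDerivAt_softplus_sub_half (x : ℝ) :
    HasDerivAt (fun x => softplus x - x / 2) (sigmoid x - 1 / 2) x :=
  (hasDerivAt_softplus x).sub ((hasDerivAt_id x).div_const 2)

lemma convexOn_softplus_sub_half : ConvexOn ℝ univ fun x => softplus x - x / 2 := by
  refine Monotone.convexOn_univ_of_deriv
    (fun x => (hasDerivAt_softplus_sub_half x).differentiableAt) ?_
  rw [funext fun x => (hasDerivAt_softplus_sub_half x).deriv]
  exact fun x y hxy => sub_le_sub_right (sigmoid_monotone hxy) _

lemma monotoneOn_softplus_sub_half : MonotoneOn (fun x => softplus x - x / 2) (Ici 0) := by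
  refine monotoneOn_of_deriv_nonneg (convex_Ici 0)
    (fun x _ => (hasDerivAt_softplus_sub_half x).continuousAt.continuousWithinAt)
    (fun x _ => (hasDerivAt_softplus_sub_half x).differentiableAt.differentiableWithinAt)
    fun x hx => ?_
  rw [(hasDerivAt_softplus_sub_half x).deriv, sub_nonneg, one_div, ← sigmoid_zero]
  exact sigmoid_monotone (interior_subset hx)

lemma ConvexOn.comp_of_mapsTo {𝕜 E α β : Type*} [Semiring 𝕜] [PartialOrder 𝕜]
    [AddCommMonoid E] [AddCommMonoid α] [PartialOrder α] [AddCommMonoid β] [PartialOrder β]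
    [SMul 𝕜 E] [SMul 𝕜 α] [SMul 𝕜 β] {s : Set E} {t : Set β} {f : E → β} {g : β → α}
    (hg : ConvexOn 𝕜 t g) (hf : ConvexOn 𝕜 s f) (hg' : MonotoneOn g t) (hst : MapsTo f s t) :
    ConvexOn 𝕜 s (g ∘ f) :=
  ⟨hf.1, fun _ hx _ hy _ _ ha hb hab =>
    (hg' (hst (hf.1 hx hy ha hb hab)) (hg.1 (hst hx) (hst hy) ha hb hab)
      (hf.2 hx hy ha hb hab)).trans (hg.2 (hst hx) (hst hy) ha hb hab)⟩

lemma convexOn_max_abs_snd_sub_fst : ConvexOn ℝ univ fun p : ℝ × ℝ => max (|p.2| - p.1) 0 :=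
  ((convexOn_univ_norm.comp_linearMap (LinearMap.snd ℝ ℝ ℝ)).sub
    ((LinearMap.fst ℝ ℝ ℝ).concaveOn convex_univ)).sup (convexOn_const 0 convex_univ)

lemma PhiRay_eq_of_nonneg_fst (p : ℝ × ℝ) (hp : 0 ≤ p.1) :
    PhiRay p = p.2 / 2 + (softplus (max (|p.2| - p.1) 0) - max (|p.2| - p.1) 0 / 2) := by
  unfold PhiRay
  split_ifs with h₁ h₂
  · rw [max_eq_left (by rw [abs_of_nonpos (by linarith)]; linarith), abs_of_nonpos (by linarith),
      show -p.2 - p.1 = -(p.2 + p.1) by ring, softplus_neg, softplus]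
    ring
  · rw [max_eq_right (by rw [sub_nonpos, abs_le]; constructor <;> linarith), softplus_zero]
    ring
  · rw [max_eq_left (by rw [abs_of_nonneg (by linarith)]; linarith), abs_of_nonneg (by linarith),
      softplus]
    ring

lemma convexOn_PhiRay : ConvexOn ℝ (Ici (0 : ℝ) ×ˢ (univ : Set ℝ)) PhiRay := by
  have hS : Convex ℝ (Ici (0 : ℝ) ×ˢ (univ : Set ℝ)) := (convex_Ici 0).prod convex_univ
  have hlin : ConvexOn ℝ (Ici (0 : ℝ) ×ˢ (univ : Set ℝ)) fun p : ℝ × ℝ => p.2 / 2 :=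
    ((LinearMap.snd ℝ ℝ ℝ).convexOn hS).smul (by norm_num : (0 : ℝ) ≤ 1 / 2) |>.congr
      fun p _ => by simp [div_eq_inv_mul]
  have hcorner :=
    (convexOn_softplus_sub_half.subset (subset_univ _) (convex_Ici 0)).comp_of_mapsTo
      (convexOn_max_abs_snd_sub_fst.subset (subset_univ _) hS) monotoneOn_softplus_sub_half
      fun p _ => mem_Ici.2 (le_max_right _ _)
  exact (hlin.add hcorner).congr fun p hp => (PhiRay_eq_of_nonneg_fst p hp.1).symm

noncomputable def hessianDet (F : ℝ × ℝ → ℝ) (t ρ : ℝ) : ℝ :=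
  deriv (deriv fun s => F (s, ρ)) t * deriv (deriv fun r => F (t, r)) ρ -
    (deriv (fun s => deriv (fun r => F (s, r)) ρ) t) ^ 2

lemma hessianDet_congr {F G : ℝ × ℝ → ℝ} {t ρ : ℝ} (h : F =ᶠ[𝓝 (t, ρ)] G) :
    hessianDet F t ρ = hessianDet G t ρ := by
  have hslices := h.curry_nhds
  have hs : (fun s => F (s, ρ)) =ᶠ[𝓝 t] fun s => G (s, ρ) :=
    hslices.mono fun s hs => hs.self_of_nhds
  have hr : (fun r => F (t, r)) =ᶠ[𝓝 ρ] fun r => G (t, r) := hslices.self_of_nhds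
  have hmixed : (fun s => deriv (fun r => F (s, r)) ρ) =ᶠ[𝓝 t]
      fun s => deriv (fun r => G (s, r)) ρ :=
    hslices.mono fun s hs => EventuallyEq.deriv_eq hs
  rw [hessianDet, hessianDet, hs.deriv.deriv_eq, hr.deriv.deriv_eq, hmixed.deriv_eq]

lemma hessianDet_ridge {L L' L'' : ℝ → ℝ} (hL : ∀ x, HasDerivAt L (L' x) x)
    (hL' : ∀ x, HasDerivAt L' (L'' x) x) (a b α β t ρ : ℝ) :
    hessianDet (fun p => a * p.1 + b * p.2 + L (α * p.1 + β * p.2)) t ρ = 0 := by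
  have hfst : ∀ c d x : ℝ, HasDerivAt (fun x => c * x + d) c x := fun c d x => by
    simpa using ((hasDerivAt_id x).const_mul c).add_const d
  have hsnd : ∀ c d x : ℝ, HasDerivAt (fun x => d + c * x) c x := fun c d x => by
    simpa using ((hasDerivAt_id x).const_mul c).const_add d
  have hs : deriv (fun s => a * s + b * ρ + L (α * s + β * ρ)) =
      fun s => a + L' (α * s + β * ρ) * α :=
    funext fun s => ((hfst a _ s).add ((hL _).comp s (hfst α _ s))).deriv
  have hr : ∀ s, deriv (fun r => a * s + b * r + L (α * s + β * r)) =
      fun r => b + L' (α * s + β * r) * β :=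
    fun s => funext fun r => ((hsnd b _ r).add ((hL _).comp r (hsnd β _ r))).deriv
  have hss : deriv (fun s => a + L' (α * s + β * ρ) * α) t = L'' (α * t + β * ρ) * α * α :=
    (((hL' _).comp t (hfst α _ t)).mul_const α |>.const_add a).deriv
  have hrr : deriv (fun r => b + L' (α * t + β * r) * β) ρ = L'' (α * t + β * ρ) * β * β :=
    (((hL' _).comp ρ (hsnd β _ ρ)).mul_const β |>.const_add b).deriv
  have hsr : deriv (fun s => b + L' (α * s + β * ρ) * β) t = L'' (α * t + β * ρ) * α * β :=
    (((hL' _).comp t (hfst α _ t)).mul_const β |>.const_add b).deriv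
  simp only [hessianDet, hs, hr, hss, hrr, hsr]
  ring

lemma contDiff_ridge {n : WithTop ℕ∞} {L : ℝ → ℝ} (hL : ContDiff ℝ n L) (a b α β : ℝ) :
    ContDiff ℝ n fun p : ℝ × ℝ => a * p.1 + b * p.2 + L (α * p.1 + β * p.2) :=
  (contDiff_const.mul contDiff_fst).add (contDiff_const.mul contDiff_snd) |>.add
    (hL.comp ((contDiff_const.mul contDiff_fst).add (contDiff_const.mul contDiff_snd)))

/-- The middle piece `ρ/2 + log 2` is the ridge with `α = β = 0`, since `softplus 0 = log 2`. -/
lemma PhiRay_eventuallyEq_ridge_softplus {t ρ : ℝ} (h₁ : ρ ≠ -t) (h₂ : ρ ≠ t) :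
    ∃ a b α β : ℝ,
      PhiRay =ᶠ[𝓝 (t, ρ)] fun p => a * p.1 + b * p.2 + softplus (α * p.1 + β * p.2) := by
  have hfst : ContinuousAt (fun p : ℝ × ℝ => p.1) (t, ρ) := continuousAt_fst
  have hsnd : ContinuousAt (fun p : ℝ × ℝ => p.2) (t, ρ) := continuousAt_snd
  have hneg : ContinuousAt (fun p : ℝ × ℝ => -p.1) (t, ρ) := continuousAt_fst.neg
  rcases h₁.lt_or_gt with hlow | hlow
  · refine ⟨-1 / 2, 0, 1, 1, ?_⟩
    filter_upwards [hsnd.eventually_lt hneg hlow] with p hp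
    simp only [PhiRay, if_pos hp.le, softplus]
    ring_nf
  rcases h₂.lt_or_gt with hup | hup
  · refine ⟨0, 1 / 2, 0, 0, ?_⟩
    filter_upwards [hneg.eventually_lt hsnd hlow, hsnd.eventually_lt hfst hup] with p hp hp'
    simp only [PhiRay, if_neg hp.not_ge, if_pos hp'.le, zero_mul, add_zero, softplus_zero]
    ring
  · refine ⟨1 / 2, 0, -1, 1, ?_⟩
    filter_upwards [hneg.eventually_lt hsnd hlow, hfst.eventually_lt hsnd hup] with p hp hp'
    simp only [PhiRay, if_neg hp.not_ge, if_neg hp'.not_ge, softplus]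
    ring_nf

/-- `Φ` is convex on `[0,∞) × ℝ` and, at every point `(t,ρ)` with `t > 0` and
`ρ ∉ {−t, t}`, it is twice differentiable with vanishing Hessian determinant:
`Φ_tt Φ_ρρ − Φ_tρ² = 0`, i.e. `Φ` solves the homogeneous real Monge–Ampère equation
away from the corner locus `ρ = ±t`. -/
theorem PhiRay_convex_and_degenerate_hessian :
    ConvexOn ℝ (Set.Ici (0 : ℝ) ×ˢ (Set.univ : Set ℝ)) PhiRay ∧
    ∀ t ρ : ℝ, 0 < t → ρ ≠ -t → ρ ≠ t →
      ContDiffAt ℝ 2 PhiRay (t, ρ) ∧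
      deriv (deriv (fun s => PhiRay (s, ρ))) t *
          deriv (deriv (fun r => PhiRay (t, r))) ρ -
        (deriv (fun s => deriv (fun r => PhiRay (s, r)) ρ) t) ^ 2 = 0 := by
  refine ⟨convexOn_PhiRay, fun t ρ _ h₁ h₂ => ?_⟩
  obtain ⟨a, b, α, β, hPhi⟩ := PhiRay_eventuallyEq_ridge_softplus h₁ h₂
  refine ⟨(contDiff_ridge contDiff_softplus a b α β).contDiffAt.congr_of_eventuallyEq hPhi, ?_⟩
  change hessianDet PhiRay t ρ = 0
  rw [hessianDet_congr hPhi]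
  exact hessianDet_ridge hasDerivAt_softplus hasDerivAt_sigmoid a b α β t ρ
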